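/- Let K be an algebraically closed field, φ: 𝔸²_K → ℙ⁴_K the map φ(x,y) = [1 : x : y : xy : x²y²], and X the closure of φ(𝔸²) in ℙ⁴. For a = (a_1,a_2) ∈ K², let H_1(a) = {(a_1,y) : y ∈ K} and H_2(a) = {(x,a_2) : x ∈ K}. Then the closures of φ(H_1(a)) and φ(H_2(a)) in ℙ⁴ have disjoint intersections with X \ φ(𝔸²) if and only if a_1 = 0 or a_2 = 0. Specifically, the unique point at infinity of the closure of φ(H_1(a)) is [0:0:1:0:0] if a_1 = 0 and [0:0:0:0:1] if a_1 ≠ 0, and similarly for H_2(a) with [0:1:0:0:0] and [0:0:0:0:1]. -/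

import Mathlib

/-- The Zariski closure of a set of points of the projective space `ℙⁿ(K)`: the set of
points at which every homogeneous polynomial vanishing on `S` vanishes. -/
def zariskiClosure {K : Type*} [Field K] {n : ℕ}
    (S : Set (Projectivization K (Fin n → K))) : Set (Projectivization K (Fin n → K)) :=
  {x | ∀ (m : ℕ) (p : MvPolynomial (Fin n) K), p.IsHomogeneous m →
    (∀ y ∈ S, MvPolynomial.eval y.rep p = 0) → MvPolynomial.eval x.rep p = 0}

/-- The map `φ : 𝔸² → ℙ⁴`, `(x, y) ↦ [1 : x : y : xy : x²y²]`. -/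
noncomputable def phiG {K : Type*} [Field K] (p : K × K) :
    Projectivization K (Fin 5 → K) :=
  Projectivization.mk K ![1, p.1, p.2, p.1 * p.2, p.1 ^ 2 * p.2 ^ 2]
    (by intro h; have := congrFun h 0; simp at this)

/-!
The quadrics `x₀x₃ = x₁x₂` and `x₀x₄ = x₃²` vanish on `φ(𝔸²)` and cut it out of the chart
`x₀ ≠ 0`, so every point of `X ∖ φ(𝔸²)` has `x₀ = x₃ = 0`. On `H₁(a)` the linear relations
`x₁ = a x₀`, `x₃ = a x₂` (and `x₄ = 0` when `a = 0`) pass to the closure, which leaves at most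
the point `[0:0:1:0:0]` for `a = 0` and `[0:0:0:0:1]` for `a ≠ 0`; `H₂(a)` is symmetric.
That point is the value at `t = 0` of a polynomial rescaling `w(t)` of `φ(a, 1/t)`, and it lies
in the closure because, for a homogeneous `p` vanishing on `φ(H₁(a))`, the polynomial
`p(w(t))` has every `t ≠ 0` as a root, so is zero since `K` is infinite.
-/

open MvPolynomial Projectivization

theorem MvPolynomial.IsHomogeneous.eval_smul {R σ : Type*} [CommSemiring R]
    {p : MvPolynomial σ R} {m : ℕ} (hp : p.IsHomogeneous m) (c : R) (v : σ → R) :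
    eval (c • v) p = c ^ m * eval v p := by
  rw [eval_eq, eval_eq, Finset.mul_sum]
  refine Finset.sum_congr rfl fun d hd => ?_
  have hdeg : ∑ i ∈ d.support, d i = m := by
    simpa [Finsupp.weight_apply, Finsupp.sum] using hp (mem_support_iff.mp hd)
  simp only [Pi.smul_apply, smul_eq_mul, mul_pow, Finset.prod_mul_distrib,
    Finset.prod_pow_eq_pow_sum, hdeg]
  ring

section Projective

variable {K : Type*} [Field K]

theorem MvPolynomial.IsHomogeneous.eval_rep_mk_eq_zero_iff {σ : Type*}
    {p : MvPolynomial σ K} {m : ℕ} (hp : p.IsHomogeneous m) (v : σ → K) (hv : v ≠ 0) :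
    eval (mk K v hv).rep p = 0 ↔ eval v p = 0 := by
  obtain ⟨a, ha⟩ := exists_smul_eq_mk_rep K v hv
  rw [← ha, Units.smul_def, hp.eval_smul]
  simp [Units.ne_zero a]

theorem mk_ne_mk_of_apply_eq_zero {σ : Type*} {v w : σ → K} (hv : v ≠ 0) (hw : w ≠ 0) (i : σ)
    (hvi : v i ≠ 0) (hwi : w i = 0) : mk K v hv ≠ mk K w hw := by
  rw [Ne, mk_eq_mk_iff']
  rintro ⟨a, rfl⟩
  simp [hwi] at hvi

theorem zariskiClosure_mono {n : ℕ} {S T : Set (Projectivization K (Fin n → K))} (h : S ⊆ T) :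
    zariskiClosure S ⊆ zariskiClosure T :=
  fun _ hx m p hp hT => hx m p hp fun y hy => hT y (h hy)

theorem mk_mem_zariskiClosure_of_curve [Infinite K] {n : ℕ}
    {S : Set (Projectivization K (Fin n → K))} (w : Fin n → Polynomial K)
    (hw : ∀ s ≠ 0, ∃ (c : K) (v : Fin n → K) (hv : v ≠ 0),
      mk K v hv ∈ S ∧ (fun i => (w i).eval s) = c • v)
    {v₀ : Fin n → K} (hv₀ : v₀ ≠ 0) (h₀ : (fun i => (w i).eval 0) = v₀) :
    mk K v₀ hv₀ ∈ zariskiClosure S := by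
  intro m p hp hS
  have eval_aeval : ∀ s, (aeval w p).eval s = eval (fun i => (w i).eval s) p := fun s => by
    rw [← Polynomial.coe_aeval_eq_eval, ← AlgHom.comp_apply, comp_aeval, ← coe_aeval_eq_eval]
    rfl
  have hroots : ∀ s ≠ 0, (aeval w p).IsRoot s := fun s hs => by
    obtain ⟨c, v, hv, hvS, hwv⟩ := hw s hs
    rw [Polynomial.IsRoot, eval_aeval, hwv, hp.eval_smul,
      (hp.eval_rep_mk_eq_zero_iff v hv).1 (hS _ hvS), mul_zero]
  have hzero : aeval w p = 0 :=
    Polynomial.eq_zero_of_infinite_isRoot _ <|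
      (Set.finite_singleton (0 : K)).infinite_compl.mono fun s hs => hroots s hs
  rw [hp.eval_rep_mk_eq_zero_iff, ← h₀, ← eval_aeval, hzero, Polynomial.eval_zero]

end Projective

section Phi

variable {K : Type*} [Field K]

def phiVec (q : K × K) : Fin 5 → K := ![1, q.1, q.2, q.1 * q.2, q.1 ^ 2 * q.2 ^ 2]

theorem phiVec_ne_zero (q : K × K) : phiVec q ≠ 0 := by
  intro h
  simpa [phiVec] using congrFun h 0

theorem phiG_eq_mk (q : K × K) : phiG q = mk K (phiVec q) (phiVec_ne_zero q) := rfl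

def verticalLine (a : K) : Set (K × K) := {p | p.1 = a}

def horizontalLine (b : K) : Set (K × K) := {p | p.2 = b}

def phiBoundary : Set (Projectivization K (Fin 5 → K)) :=
  zariskiClosure (Set.range (phiG (K := K))) \ Set.range (phiG (K := K))

def pointsAtInfinity (T : Set (K × K)) : Set (Projectivization K (Fin 5 → K)) :=
  zariskiClosure (phiG '' T) ∩ phiBoundary

theorem mk_mem_zariskiClosure_image_phiG_of_curve [Infinite K] {T : Set (K × K)}
    (w : Fin 5 → Polynomial K) (c : K → K) (q : K → K × K) (hq : ∀ s ≠ 0, q s ∈ T)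
    (hw : ∀ s ≠ 0, (fun i => (w i).eval s) = c s • phiVec (q s))
    {v₀ : Fin 5 → K} (hv₀ : v₀ ≠ 0) (h₀ : (fun i => (w i).eval 0) = v₀) :
    mk K v₀ hv₀ ∈ zariskiClosure (phiG '' T) :=
  mk_mem_zariskiClosure_of_curve w
    (fun s hs => ⟨c s, phiVec (q s), phiVec_ne_zero _, Set.mem_image_of_mem phiG (hq s hs),
      hw s hs⟩) hv₀ h₀

theorem mk_not_mem_range_phiG {v : Fin 5 → K} (hv : v ≠ 0) (h0 : v 0 = 0) :
    mk K v hv ∉ Set.range (phiG (K := K)) := by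
  rintro ⟨q, hq⟩
  exact mk_ne_mk_of_apply_eq_zero (phiVec_ne_zero q) hv 0 (by simp [phiVec]) h0 hq

theorem mk_mem_pointsAtInfinity {T : Set (K × K)} {v : Fin 5 → K} (hv : v ≠ 0)
    (hT : mk K v hv ∈ zariskiClosure (phiG '' T)) (h0 : v 0 = 0) :
    mk K v hv ∈ pointsAtInfinity T :=
  ⟨hT, zariskiClosure_mono (Set.image_subset_range _ _) hT, mk_not_mem_range_phiG hv h0⟩

section Relations

variable {T : Set (K × K)} {x : Projectivization K (Fin 5 → K)}
  (hx : x ∈ zariskiClosure (phiG '' T))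
include hx

theorem eval_rep_eq_zero_of_mem_zariskiClosure_image {m : ℕ} {p : MvPolynomial (Fin 5) K}
    (hp : p.IsHomogeneous m) (hT : ∀ q ∈ T, eval (phiVec q) p = 0) : eval x.rep p = 0 :=
  hx m p hp <| by
    rintro _ ⟨q, hq, rfl⟩
    exact (hp.eval_rep_mk_eq_zero_iff _ _).2 (hT q hq)

theorem rep_eq_mul_of_mem_zariskiClosure_image (i j : Fin 5) (a : K)
    (hT : ∀ q ∈ T, phiVec q i = a * phiVec q j) : x.rep i = a * x.rep j := by
  have hp : (X i - C a * X j : MvPolynomial (Fin 5) K).IsHomogeneous 1 := by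
    simpa using (isHomogeneous_X K i).sub ((isHomogeneous_C _ a).mul (isHomogeneous_X K j))
  have := eval_rep_eq_zero_of_mem_zariskiClosure_image hx hp fun q hq => by simp [hT q hq]
  simpa [sub_eq_zero] using this

theorem rep_eq_zero_of_mem_zariskiClosure_image (i : Fin 5) (hT : ∀ q ∈ T, phiVec q i = 0) :
    x.rep i = 0 := by
  simpa using rep_eq_mul_of_mem_zariskiClosure_image hx i 0 0 (by simpa using hT)

theorem rep_mul_eq_of_mem_zariskiClosure_image (i j k l : Fin 5)
    (hT : ∀ q ∈ T, phiVec q i * phiVec q j = phiVec q k * phiVec q l) :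
    x.rep i * x.rep j = x.rep k * x.rep l := by
  have hp : (X i * X j - X k * X l : MvPolynomial (Fin 5) K).IsHomogeneous 2 :=
    ((isHomogeneous_X K i).mul (isHomogeneous_X K j)).sub
      ((isHomogeneous_X K k).mul (isHomogeneous_X K l))
  have := eval_rep_eq_zero_of_mem_zariskiClosure_image hx hp fun q hq => by simp [hT q hq]
  simpa [sub_eq_zero] using this

end Relations

theorem phiG_eq_mk_of_relations {v : Fin 5 → K} (hv : v ≠ 0) (h0 : v 0 ≠ 0)
    (h₁ : v 0 * v 3 = v 1 * v 2) (h₂ : v 0 * v 4 = v 3 * v 3) :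
    phiG (v 1 / v 0, v 2 / v 0) = mk K v hv := by
  rw [phiG_eq_mk, mk_eq_mk_iff']
  refine ⟨(v 0)⁻¹, funext fun i => ?_⟩
  fin_cases i <;> simp [phiVec] <;> field_simp
  · linear_combination h₁
  · linear_combination v 0 ^ 2 * h₂ + (v 0 * v 3 + v 1 * v 2) * h₁

theorem rep_eq_zero_of_mem_phiBoundary {x : Projectivization K (Fin 5 → K)}
    (hx : x ∈ phiBoundary) : x.rep 0 = 0 ∧ x.rep 3 = 0 := by
  obtain ⟨hxX, hxφ⟩ := hx
  rw [← Set.image_univ] at hxX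
  have h₁ : x.rep 0 * x.rep 3 = x.rep 1 * x.rep 2 :=
    rep_mul_eq_of_mem_zariskiClosure_image hxX 0 3 1 2 fun q _ => by simp [phiVec]
  have h₂ : x.rep 0 * x.rep 4 = x.rep 3 * x.rep 3 :=
    rep_mul_eq_of_mem_zariskiClosure_image hxX 0 4 3 3 fun q _ => by simp [phiVec]; ring
  have h0 : x.rep 0 = 0 := by
    by_contra h0
    exact hxφ ⟨_, (phiG_eq_mk_of_relations x.rep_nonzero h0 h₁ h₂).trans (mk_rep x)⟩
  refine ⟨h0, ?_⟩
  simpa [h0, eq_comm] using h₂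

end Phi

section Lines

variable {K : Type*} [Field K] [Infinite K]

theorem pointsAtInfinity_verticalLine_zero :
    pointsAtInfinity (verticalLine (0 : K)) =
      {mk K ![0, 0, 1, 0, 0] fun h => one_ne_zero (congrFun h 2)} := by
  refine Set.eq_singleton_iff_unique_mem.2 ⟨mk_mem_pointsAtInfinity _ ?_ rfl, ?_⟩
  · exact mk_mem_zariskiClosure_image_phiG_of_curve ![Polynomial.X, 0, 1, 0, 0] id
      (fun s => (0, s⁻¹)) (fun _ _ => rfl)
      (fun s hs => by ext i; fin_cases i <;> simp [phiVec, hs]) _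
      (by ext i; fin_cases i <;> simp)
  rintro x ⟨hx, hxB⟩
  obtain ⟨h0, h3⟩ := rep_eq_zero_of_mem_phiBoundary hxB
  have h1 := rep_eq_zero_of_mem_zariskiClosure_image hx 1 fun q hq => hq
  have h4 := rep_eq_zero_of_mem_zariskiClosure_image hx 4 fun q (hq : q.1 = 0) => by
    simp [phiVec, hq]
  rw [← mk_rep x, mk_eq_mk_iff']
  exact ⟨x.rep 2, by ext i; fin_cases i <;> simp [h0, h1, h3, h4]⟩

theorem pointsAtInfinity_verticalLine_of_ne_zero {a : K} (ha : a ≠ 0) :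
    pointsAtInfinity (verticalLine a) =
      {mk K ![0, 0, 0, 0, 1] fun h => one_ne_zero (congrFun h 4)} := by
  refine Set.eq_singleton_iff_unique_mem.2 ⟨mk_mem_pointsAtInfinity _ ?_ rfl, ?_⟩
  · exact mk_mem_zariskiClosure_image_phiG_of_curve
      ![Polynomial.C a⁻¹ ^ 2 * Polynomial.X ^ 2, Polynomial.C a⁻¹ * Polynomial.X ^ 2,
        Polynomial.C a⁻¹ ^ 2 * Polynomial.X, Polynomial.C a⁻¹ * Polynomial.X, 1]
      (fun s => (s / a) ^ 2) (fun s => (a, s⁻¹)) (fun _ _ => rfl)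
      (fun s hs => by ext i; fin_cases i <;> simp [phiVec] <;> field_simp) _
      (by ext i; fin_cases i <;> simp)
  rintro x ⟨hx, hxB⟩
  obtain ⟨h0, h3⟩ := rep_eq_zero_of_mem_phiBoundary hxB
  have h1 := rep_eq_mul_of_mem_zariskiClosure_image hx 1 0 a fun q (hq : q.1 = a) => by
    simp [phiVec, hq]
  have h2 := rep_eq_mul_of_mem_zariskiClosure_image hx 3 2 a fun q (hq : q.1 = a) => by
    simp [phiVec, hq]
  rw [h3, eq_comm, mul_eq_zero, or_iff_right ha] at h2
  rw [← mk_rep x, mk_eq_mk_iff']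
  exact ⟨x.rep 4, by ext i; fin_cases i <;> simp [h0, h1, h2, h3]⟩

theorem pointsAtInfinity_horizontalLine_zero :
    pointsAtInfinity (horizontalLine (0 : K)) =
      {mk K ![0, 1, 0, 0, 0] fun h => one_ne_zero (congrFun h 1)} := by
  refine Set.eq_singleton_iff_unique_mem.2 ⟨mk_mem_pointsAtInfinity _ ?_ rfl, ?_⟩
  · exact mk_mem_zariskiClosure_image_phiG_of_curve ![Polynomial.X, 1, 0, 0, 0] id
      (fun s => (s⁻¹, 0)) (fun _ _ => rfl)
      (fun s hs => by ext i; fin_cases i <;> simp [phiVec, hs]) _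
      (by ext i; fin_cases i <;> simp)
  rintro x ⟨hx, hxB⟩
  obtain ⟨h0, h3⟩ := rep_eq_zero_of_mem_phiBoundary hxB
  have h2 := rep_eq_zero_of_mem_zariskiClosure_image hx 2 fun q hq => hq
  have h4 := rep_eq_zero_of_mem_zariskiClosure_image hx 4 fun q (hq : q.2 = 0) => by
    simp [phiVec, hq]
  rw [← mk_rep x, mk_eq_mk_iff']
  exact ⟨x.rep 1, by ext i; fin_cases i <;> simp [h0, h2, h3, h4]⟩

theorem pointsAtInfinity_horizontalLine_of_ne_zero {b : K} (hb : b ≠ 0) :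
    pointsAtInfinity (horizontalLine b) =
      {mk K ![0, 0, 0, 0, 1] fun h => one_ne_zero (congrFun h 4)} := by
  refine Set.eq_singleton_iff_unique_mem.2 ⟨mk_mem_pointsAtInfinity _ ?_ rfl, ?_⟩
  · exact mk_mem_zariskiClosure_image_phiG_of_curve
      ![Polynomial.C b⁻¹ ^ 2 * Polynomial.X ^ 2, Polynomial.C b⁻¹ ^ 2 * Polynomial.X,
        Polynomial.C b⁻¹ * Polynomial.X ^ 2, Polynomial.C b⁻¹ * Polynomial.X, 1]
      (fun s => (s / b) ^ 2) (fun s => (s⁻¹, b)) (fun _ _ => rfl)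
      (fun s hs => by ext i; fin_cases i <;> simp [phiVec] <;> field_simp) _
      (by ext i; fin_cases i <;> simp)
  rintro x ⟨hx, hxB⟩
  obtain ⟨h0, h3⟩ := rep_eq_zero_of_mem_phiBoundary hxB
  have h2 := rep_eq_mul_of_mem_zariskiClosure_image hx 2 0 b fun q (hq : q.2 = b) => by
    simp [phiVec, hq]
  have h1 := rep_eq_mul_of_mem_zariskiClosure_image hx 3 1 b fun q (hq : q.2 = b) => by
    simp [phiVec, hq, mul_comm]
  rw [h3, eq_comm, mul_eq_zero, or_iff_right hb] at h1
  rw [← mk_rep x, mk_eq_mk_iff']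
  exact ⟨x.rep 4, by ext i; fin_cases i <;> simp [h0, h1, h2, h3]⟩

theorem pointsAtInfinity_verticalLine_inter_horizontalLine_eq_empty_iff (a b : K) :
    pointsAtInfinity (verticalLine a) ∩ pointsAtInfinity (horizontalLine b) = ∅ ↔
      a = 0 ∨ b = 0 := by
  rcases eq_or_ne a 0 with rfl | ha <;> rcases eq_or_ne b 0 with rfl | hb
  · simpa [pointsAtInfinity_verticalLine_zero, pointsAtInfinity_horizontalLine_zero]
      using mk_ne_mk_of_apply_eq_zero _ _ 1 one_ne_zero rfl
  · simpa [pointsAtInfinity_verticalLine_zero, pointsAtInfinity_horizontalLine_of_ne_zero hb]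
      using mk_ne_mk_of_apply_eq_zero _ _ 4 one_ne_zero rfl
  · simpa [pointsAtInfinity_verticalLine_of_ne_zero ha, pointsAtInfinity_horizontalLine_zero]
      using mk_ne_mk_of_apply_eq_zero _ _ 1 one_ne_zero rfl
  · simp [pointsAtInfinity_verticalLine_of_ne_zero ha,
      pointsAtInfinity_horizontalLine_of_ne_zero hb, ha, hb]

end Lines

/-- For the embedding `φ(x,y) = [1:x:y:xy:x²y²]` of `𝔸²` in `ℙ⁴`, with
`X` the closure of `φ(𝔸²)` and `H₁(a) = {x = a₁}`, `H₂(a) = {y = a₂}`: the unique point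
at infinity of the closure of `φ(H₁(a))` is `[0:0:1:0:0]` if `a₁ = 0` and `[0:0:0:0:1]`
otherwise, that of `φ(H₂(a))` is `[0:1:0:0:0]` if `a₂ = 0` and `[0:0:0:0:1]` otherwise,
and the two closures have disjoint intersections with `X ∖ φ(𝔸²)` iff `a₁ = 0` or
`a₂ = 0`. -/
theorem closures_at_infinity_xy_example
    {K : Type*} [Field K] [IsAlgClosed K] (a₁ a₂ : K) :
    (a₁ = 0 →
      zariskiClosure (phiG '' {p : K × K | p.1 = a₁}) ∩
          (zariskiClosure (Set.range (phiG (K := K))) \ Set.range (phiG (K := K))) =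
        {Projectivization.mk K ![0, 0, 1, 0, 0]
          (by intro h; have := congrFun h 2; simp at this)}) ∧
    (a₁ ≠ 0 →
      zariskiClosure (phiG '' {p : K × K | p.1 = a₁}) ∩
          (zariskiClosure (Set.range (phiG (K := K))) \ Set.range (phiG (K := K))) =
        {Projectivization.mk K ![0, 0, 0, 0, 1]
          (by intro h; have := congrFun h 4; simp at this)}) ∧
    (a₂ = 0 →
      zariskiClosure (phiG '' {p : K × K | p.2 = a₂}) ∩
          (zariskiClosure (Set.range (phiG (K := K))) \ Set.range (phiG (K := K))) =
        {Projectivization.mk K ![0, 1, 0, 0, 0]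
          (by intro h; have := congrFun h 1; simp at this)}) ∧
    (a₂ ≠ 0 →
      zariskiClosure (phiG '' {p : K × K | p.2 = a₂}) ∩
          (zariskiClosure (Set.range (phiG (K := K))) \ Set.range (phiG (K := K))) =
        {Projectivization.mk K ![0, 0, 0, 0, 1]
          (by intro h; have := congrFun h 4; simp at this)}) ∧
    ((zariskiClosure (phiG '' {p : K × K | p.1 = a₁}) ∩
        zariskiClosure (phiG '' {p : K × K | p.2 = a₂}) ∩
        (zariskiClosure (Set.range (phiG (K := K))) \ Set.range (phiG (K := K))) = ∅) ↔
      (a₁ = 0 ∨ a₂ = 0)) := by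
  refine ⟨fun h => ?_, pointsAtInfinity_verticalLine_of_ne_zero, fun h => ?_,
    pointsAtInfinity_horizontalLine_of_ne_zero, ?_⟩
  · subst h
    exact pointsAtInfinity_verticalLine_zero
  · subst h
    exact pointsAtInfinity_horizontalLine_zero
  · rw [Set.inter_inter_distrib_right]
    exact pointsAtInfinity_verticalLine_inter_horizontalLine_eq_empty_iff a₁ a₂
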